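/- arXiv:1801.01896 — 2 statements merged into one kernel-verified Lean document; each statement's English description precedes it below -/
import Mathlib

section
/- If two well-formed environments E1 and E2 are size-equivalent on a set X of variables with respect to a resource-annotated context Γ, then the potentials of X under E1 and E2 agree: Φ_{E1}(X : Γ) = Φ_{E2}(X : Γ). -/
set_option autoImplicit true
set_option maxHeartbeats 1000000

abbrev Vid := String
abbrev Fid := String

/-- Values of the first-order language. -/
inductive Val : Type
  | unit : Val
  | bool : Bool → Val
  | int  : Int → Val
  | pair : Val → Val → Val
  | list : List Val → Val

/-- Base types. -/
inductive Ty : Type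
  | unit : Ty
  | bool : Ty
  | int  : Ty
  | list : Ty → Ty
  | prod : Ty → Ty → Ty

/-- Well-formed values of a base type. -/
inductive WF : Val → Ty → Prop
  | unit : WF .unit .unit
  | bool (b : Bool) : WF (.bool b) .bool
  | int (n : Int) : WF (.int n) .int
  | pair : WF v1 T1 → WF v2 T2 → WF (.pair v1 v2) (.prod T1 T2)
  | nil : WF (.list []) (.list T)
  | cons : WF v T → WF (.list vs) (.list T) → WF (.list (v :: vs)) (.list T)

/-- Size equivalence of values. -/
inductive SizeEq : Val → Val → Prop
  | unit : SizeEq .unit .unit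
  | bool (b1 b2 : Bool) : SizeEq (.bool b1) (.bool b2)
  | int (n1 n2 : Int) : SizeEq (.int n1) (.int n2)
  | pair : SizeEq v1 u1 → SizeEq v2 u2 → SizeEq (.pair v1 v2) (.pair u1 u2)
  | nil : SizeEq (.list []) (.list [])
  | cons : SizeEq v u → SizeEq (.list vs) (.list us) →
      SizeEq (.list (v :: vs)) (.list (u :: us))

/-- Resource-annotated types: list types carry a nonnegative rational potential
annotation. -/
inductive ATy : Type
  | unit : ATy
  | bool : ATy
  | int  : ATy
  | list : ℚ≥0 → ATy → ATy
  | prod : ATy → ATy → ATy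

/-- The underlying base type of an annotated type. -/
def ATy.erase : ATy → Ty
  | .unit => .unit
  | .bool => .bool
  | .int  => .int
  | .list _ A => .list A.erase
  | .prod A B => .prod A.erase B.erase

def ATy.IsAtom : ATy → Prop
  | .unit => True
  | .bool => True
  | .int  => True
  | _ => False

/-- The potential `Φ(v : A)` of a value `v` at annotated type `A`:
`0` on atoms, additive on pairs, and `n·p + Σ Φ(vᵢ:A)` on lists at `L^p(A)`. -/
def pot : Val → ATy → ℚ≥0
  | .pair v1 v2, .prod A1 A2 => pot v1 A1 + pot v2 A2
  | .list [], .list _ _ => 0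
  | .list (v :: vs), .list p A => p + pot v A + pot (.list vs) (.list p A)
  | _, _ => 0

/-- The sharing relation `Share(A | A1, A2)`. -/
inductive Share : ATy → ATy → ATy → Prop
  | unit : Share .unit .unit .unit
  | bool : Share .bool .bool .bool
  | int  : Share .int .int .int
  | prod : Share A A1 A2 → Share B B1 B2 →
      Share (.prod A B) (.prod A1 B1) (.prod A2 B2)
  | list : Share A A1 A2 → p = p1 + p2 →
      Share (.list p A) (.list p1 A1) (.list p2 A2)

/-- Subtyping of resource-annotated types. -/
inductive Subty : ATy → ATy → Prop
  | unit : Subty .unit .unit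
  | bool : Subty .bool .bool
  | int  : Subty .int .int
  | list : Subty A B → p ≤ q → Subty (.list p A) (.list q B)
  | prod : Subty A1 B1 → Subty A2 B2 → Subty (.prod A1 A2) (.prod B1 B2)

theorem SizeEq.pot_eq {v u : Val} (h : SizeEq v u) (A : ATy) : pot v A = pot u A := by
  induction h generalizing A with
  | unit | nil => rfl
  | bool | int => cases A <;> simp only [pot]
  | pair _ _ ih1 ih2 | cons _ _ ih1 ih2 => cases A <;> simp only [pot, ih1, ih2]

theorem potential_eq_of_sizeEq_general (Γ : Vid → ATy) (X : Finset Vid)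
    (E1 E2 : Vid → Val)
    (hsize : ∀ x ∈ X, SizeEq (E1 x) (E2 x)) :
    ∑ x ∈ X, pot (E1 x) (Γ x) = ∑ x ∈ X, pot (E2 x) (Γ x) :=
  Finset.sum_congr rfl fun x hx => (hsize x hx).pot_eq (Γ x)

/-- If two well-formed environments are size-equivalent on `X` with respect to
a resource-annotated context `Γ`, then `Φ_{E1}(X : Γ) = Φ_{E2}(X : Γ)`. -/
theorem potential_eq_of_sizeEq (Γ : Vid → ATy) (X : Finset Vid)
    (E1 E2 : Vid → Val)
    (hw1 : ∀ x ∈ X, WF (E1 x) (Γ x).erase)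
    (hw2 : ∀ x ∈ X, WF (E2 x) (Γ x).erase)
    (hsize : ∀ x ∈ X, SizeEq (E1 x) (E2 x)) :
    ∑ x ∈ X, pot (E1 x) (Γ x) = ∑ x ∈ X, pot (E2 x) (Γ x) :=
  potential_eq_of_sizeEq_general Γ X E1 E2 hsize
end

section
/- The sharing relation preserves potential: if the sharing relation Share(A | A1, A2) holds, then for every well-formed value v of the underlying base type, Φ(v : A) = Φ(v : A1) + Φ(v : A2). -/
set_option autoImplicit true
set_option maxHeartbeats 1000000

theorem pot_eq_zero_of_isAtom {A : ATy} (hA : A.IsAtom) (v : Val) : pot v A = 0 := by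
  cases A <;> first | exact hA.elim | cases v <;> simp [pot]

theorem WF.of_mem_list {vs : List Val} {T : Ty} (h : WF (.list vs) (.list T)) :
    ∀ v ∈ vs, WF v T := by
  induction vs with
  | nil => simp
  | cons v vs ih =>
    cases h with
    | cons hv hvs => simpa [hv] using ih hvs

theorem pot_list_add {vs : List Val} {A A1 A2 : ATy} (p1 p2 : ℚ≥0)
    (h : ∀ v ∈ vs, pot v A = pot v A1 + pot v A2) :
    pot (.list vs) (.list (p1 + p2) A) =
      pot (.list vs) (.list p1 A1) + pot (.list vs) (.list p2 A2) := by
  induction vs with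
  | nil => simp [pot]
  | cons v vs ih =>
    simp only [List.forall_mem_cons] at h
    simp only [pot, h.1, ih h.2]
    ring

/-- Sharing preserves potential: if `Share(A | A1, A2)` then for every
well-formed value `v` of the underlying base type,
`Φ(v : A) = Φ(v : A1) + Φ(v : A2)`. -/
theorem share_potential (A A1 A2 : ATy) (h : Share A A1 A2) :
    ∀ v : Val, WF v A.erase → pot v A = pot v A1 + pot v A2 := by
  induction h with
  | unit | bool | int => intro v _; rw [pot_eq_zero_of_isAtom ?_ v, add_zero]; trivial
  | prod _ _ ihA ihB =>
    intro v hv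
    cases hv with
    | pair hv1 hv2 =>
      simp only [pot, ihA _ hv1, ihB _ hv2]
      ring
  | list _ hp ih =>
    intro v hv
    cases hv with
    | nil => simp [pot]
    | cons hv hvs =>
      subst hp
      exact pot_list_add _ _ fun w hw => ih w ((WF.cons hv hvs).of_mem_list w hw)
end
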